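/- For the right-angled Artin presentation ⟨a,b,c,d | ac = ca, bc = cb, ad = da, bd = db⟩, the signed word a⁻¹c⁻¹dab⁻¹d⁻¹cb represents the identity in the presented group, but no right-reversing or left-reversing step applies to it (it contains no subword s⁻¹t or ts⁻¹ with a relation s… = t… or …s = …t in R, other than trivial ones, and none is present). -/
import Mathlib


/-- A congruence on the free monoid of words over `S`: an equivalence relation
compatible with concatenation. -/
def IsCong {S : Type} (r : List S → List S → Prop) : Prop :=
  Equivalence r ∧ ∀ a b c d : List S, r a b → r c d → r (a ++ c) (b ++ d)

/-- `R`-equivalence: the smallest congruence on the free monoid `S*`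
containing the relations `R`. -/
def REquiv {S : Type} (R : List S → List S → Prop) (w w' : List S) : Prop :=
  ∀ r : List S → List S → Prop, IsCong r → (∀ a b, R a b → r a b) → r w w'

/-- The positive word `w` viewed as a signed word. -/
def wpos {S : Type} (w : List S) : List (S ⊕ S) := w.map Sum.inl

/-- The formal inverse `w⁻¹` of a positive word `w`, as a signed word. -/
def wneg {S : Type} (w : List S) : List (S ⊕ S) := (w.map Sum.inr).reverse

/-- One step of right-reversing with respect to `R`: replace a subword `s⁻¹t`
by `v'·v⁻¹` where `s·v' = t·v` is a relation of `R` (in either orientation),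
including the trivial step `s⁻¹s ↷ ε`. -/
def RevStep {S : Type} (R : List S → List S → Prop) (x y : List (S ⊕ S)) : Prop :=
  ∃ (u u' : List (S ⊕ S)) (s t : S) (v v' : List S),
    x = u ++ [Sum.inr s, Sum.inl t] ++ u' ∧
    y = u ++ wpos v' ++ wneg v ++ u' ∧
    (R (s :: v') (t :: v) ∨ R (t :: v) (s :: v') ∨ (s = t ∧ v = [] ∧ v' = []))

/-- Right-reversing: finitely many reversing steps. -/
def Rev {S : Type} (R : List S → List S → Prop) :
    List (S ⊕ S) → List (S ⊕ S) → Prop :=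
  Relation.ReflTransGen (RevStep R)

/-- Completeness of a presentation with respect to right-reversing. -/
def Complete {S : Type} (R : List S → List S → Prop) : Prop :=
  ∀ w w' : List S, REquiv R w w' → Rev R (wneg w ++ wpos w') []


/-- A congruence on signed words: an equivalence relation compatible with
concatenation. -/
def IsCongS {S : Type} (r : List (S ⊕ S) → List (S ⊕ S) → Prop) : Prop :=
  Equivalence r ∧ ∀ a b c d : List (S ⊕ S), r a b → r c d → r (a ++ c) (b ++ d)

/-- Group equivalence: the smallest congruence on signed words containing the
relations of `R` and the free-group cancellations `s·s⁻¹ = ε = s⁻¹·s`.  Two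
signed words are `GEquiv`-related iff they represent the same element of the
group presented by `(S, R)`. -/
def GEquiv {S : Type} (R : List S → List S → Prop)
    (x y : List (S ⊕ S)) : Prop :=
  ∀ r : List (S ⊕ S) → List (S ⊕ S) → Prop, IsCongS r →
    (∀ v v' : List S, R v v' → r (wpos v) (wpos v')) →
    (∀ s : S, r [Sum.inl s, Sum.inr s] [] ∧ r [Sum.inr s, Sum.inl s] []) →
    r x y

/-- One step of left-reversing with respect to `R`: replace a subword `t·s⁻¹`
by `v⁻¹·v'` where `v'·t = v·s` is a relation of `R` (in either orientation),
including the trivial step `s·s⁻¹ ↷ ε`. -/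
def LRevStep {S : Type} (R : List S → List S → Prop)
    (x y : List (S ⊕ S)) : Prop :=
  ∃ (u u' : List (S ⊕ S)) (s t : S) (v v' : List S),
    x = u ++ [Sum.inl t, Sum.inr s] ++ u' ∧
    y = u ++ wneg v ++ wpos v' ++ u' ∧
    (R (v' ++ [t]) (v ++ [s]) ∨ R (v ++ [s]) (v' ++ [t]) ∨
      (s = t ∧ v = [] ∧ v' = []))

/-- The four generators. -/
inductive L : Type | a | b | c | d
open L

/-- The right-angled Artin relations ac = ca, bc = cb, ad = da, bd = db. -/
def R17 : List L → List L → Prop := fun x y =>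
  (x = [a,c] ∧ y = [c,a]) ∨ (x = [b,c] ∧ y = [c,b]) ∨
  (x = [a,d] ∧ y = [d,a]) ∨ (x = [b,d] ∧ y = [d,b])

/-- The signed word a⁻¹c⁻¹dab⁻¹d⁻¹cb represents the identity in the
right-angled Artin group ⟨a,b,c,d | ac = ca, bc = cb, ad = da, bd = db⟩, but
no right-reversing step and no left-reversing step applies to it. -/
theorem stmt17 :
    GEquiv R17 [Sum.inr a, Sum.inr c, Sum.inl d, Sum.inl a,
      Sum.inr b, Sum.inr d, Sum.inl c, Sum.inl b] [] ∧
    (∀ y : List (L ⊕ L), ¬ RevStep R17 [Sum.inr a, Sum.inr c, Sum.inl d,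
      Sum.inl a, Sum.inr b, Sum.inr d, Sum.inl c, Sum.inl b] y) ∧
    (∀ y : List (L ⊕ L), ¬ LRevStep R17 [Sum.inr a, Sum.inr c, Sum.inl d,
      Sum.inl a, Sum.inr b, Sum.inr d, Sum.inl c, Sum.inl b] y) := by
  refine ⟨?_, ?_, ?_⟩
  · intro r hr hR hC
    obtain ⟨heq, hcong⟩ := hr
    have ctx : ∀ (u u' m m' : List (L ⊕ L)), r m m' →
        r (u ++ (m ++ u')) (u ++ (m' ++ u')) := fun u u' m m' h =>
      hcong u u (m ++ u') (m' ++ u') (heq.refl u) (hcong m m' u' u' h (heq.refl u'))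
    -- positive relation swaps
    have hac : r [Sum.inl a, Sum.inl c] [Sum.inl c, Sum.inl a] := by
      simpa [wpos] using hR [a,c] [c,a] (Or.inl ⟨rfl, rfl⟩)
    have hcb : r [Sum.inl c, Sum.inl b] [Sum.inl b, Sum.inl c] :=
      heq.symm (by simpa [wpos] using hR [b,c] [c,b] (Or.inr (Or.inl ⟨rfl, rfl⟩)))
    have hda : r [Sum.inl d, Sum.inl a] [Sum.inl a, Sum.inl d] :=
      heq.symm (by simpa [wpos] using hR [a,d] [d,a] (Or.inr (Or.inr (Or.inl ⟨rfl, rfl⟩))))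
    have hbd : r [Sum.inl b, Sum.inl d] [Sum.inl d, Sum.inl b] := by
      simpa [wpos] using hR [b,d] [d,b] (Or.inr (Or.inr (Or.inr ⟨rfl, rfl⟩)))
    -- derived swap: c⁻¹ a ≈ a c⁻¹
    have hca : r [Sum.inr c, Sum.inl a] [Sum.inl a, Sum.inr c] := by
      have t1 : r [Sum.inr c, Sum.inl a] [Sum.inr c, Sum.inl a, Sum.inl c, Sum.inr c] := by
        simpa using hcong [Sum.inr c, Sum.inl a] [Sum.inr c, Sum.inl a] []
          [Sum.inl c, Sum.inr c] (heq.refl _) (heq.symm (hC c).1)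
      have t2 : r [Sum.inr c, Sum.inl a, Sum.inl c, Sum.inr c]
          [Sum.inr c, Sum.inl c, Sum.inl a, Sum.inr c] := by
        simpa using ctx [Sum.inr c] [Sum.inr c] [Sum.inl a, Sum.inl c]
          [Sum.inl c, Sum.inl a] hac
      have t3 : r [Sum.inr c, Sum.inl c, Sum.inl a, Sum.inr c] [Sum.inl a, Sum.inr c] := by
        simpa using hcong [Sum.inr c, Sum.inl c] [] [Sum.inl a, Sum.inr c]
          [Sum.inl a, Sum.inr c] (hC c).2 (heq.refl _)
      exact heq.trans (heq.trans t1 t2) t3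
    -- derived swap: d b⁻¹ ≈ b⁻¹ d
    have hdb : r [Sum.inl d, Sum.inr b] [Sum.inr b, Sum.inl d] := by
      have t1 : r [Sum.inl d, Sum.inr b] [Sum.inr b, Sum.inl b, Sum.inl d, Sum.inr b] := by
        simpa using hcong [] [Sum.inr b, Sum.inl b] [Sum.inl d, Sum.inr b]
          [Sum.inl d, Sum.inr b] (heq.symm (hC b).2) (heq.refl _)
      have t2 : r [Sum.inr b, Sum.inl b, Sum.inl d, Sum.inr b]
          [Sum.inr b, Sum.inl d, Sum.inl b, Sum.inr b] := by
        simpa using ctx [Sum.inr b] [Sum.inr b] [Sum.inl b, Sum.inl d]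
          [Sum.inl d, Sum.inl b] hbd
      have t3 : r [Sum.inr b, Sum.inl d, Sum.inl b, Sum.inr b] [Sum.inr b, Sum.inl d] := by
        simpa using hcong [Sum.inr b, Sum.inl d] [Sum.inr b, Sum.inl d]
          [Sum.inl b, Sum.inr b] [] (heq.refl _) (hC b).1
      exact heq.trans (heq.trans t1 t2) t3
    -- derived swap: b⁻¹ c ≈ c b⁻¹
    have hbc : r [Sum.inr b, Sum.inl c] [Sum.inl c, Sum.inr b] := by
      have t1 : r [Sum.inr b, Sum.inl c] [Sum.inr b, Sum.inl c, Sum.inl b, Sum.inr b] := by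
        simpa using hcong [Sum.inr b, Sum.inl c] [Sum.inr b, Sum.inl c] []
          [Sum.inl b, Sum.inr b] (heq.refl _) (heq.symm (hC b).1)
      have t2 : r [Sum.inr b, Sum.inl c, Sum.inl b, Sum.inr b]
          [Sum.inr b, Sum.inl b, Sum.inl c, Sum.inr b] := by
        simpa using ctx [Sum.inr b] [Sum.inr b] [Sum.inl c, Sum.inl b]
          [Sum.inl b, Sum.inl c] hcb
      have t3 : r [Sum.inr b, Sum.inl b, Sum.inl c, Sum.inr b] [Sum.inl c, Sum.inr b] := by
        simpa using hcong [Sum.inr b, Sum.inl b] [] [Sum.inl c, Sum.inr b]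
          [Sum.inl c, Sum.inr b] (hC b).2 (heq.refl _)
      exact heq.trans (heq.trans t1 t2) t3
    -- main chain
    have s1 : r [Sum.inr a, Sum.inr c, Sum.inl d, Sum.inl a, Sum.inr b, Sum.inr d,
        Sum.inl c, Sum.inl b] [Sum.inr a, Sum.inr c, Sum.inl a, Sum.inl d, Sum.inr b,
        Sum.inr d, Sum.inl c, Sum.inl b] := by
      simpa using ctx [Sum.inr a, Sum.inr c] [Sum.inr b, Sum.inr d, Sum.inl c, Sum.inl b]
        [Sum.inl d, Sum.inl a] [Sum.inl a, Sum.inl d] hda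
    have s2 : r [Sum.inr a, Sum.inr c, Sum.inl a, Sum.inl d, Sum.inr b, Sum.inr d,
        Sum.inl c, Sum.inl b] [Sum.inr a, Sum.inl a, Sum.inr c, Sum.inl d, Sum.inr b,
        Sum.inr d, Sum.inl c, Sum.inl b] := by
      simpa using ctx [Sum.inr a] [Sum.inl d, Sum.inr b, Sum.inr d, Sum.inl c, Sum.inl b]
        [Sum.inr c, Sum.inl a] [Sum.inl a, Sum.inr c] hca
    have s3 : r [Sum.inr a, Sum.inl a, Sum.inr c, Sum.inl d, Sum.inr b, Sum.inr d,
        Sum.inl c, Sum.inl b] [Sum.inr c, Sum.inl d, Sum.inr b, Sum.inr d,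
        Sum.inl c, Sum.inl b] := by
      simpa using hcong [Sum.inr a, Sum.inl a] []
        [Sum.inr c, Sum.inl d, Sum.inr b, Sum.inr d, Sum.inl c, Sum.inl b]
        [Sum.inr c, Sum.inl d, Sum.inr b, Sum.inr d, Sum.inl c, Sum.inl b]
        (hC a).2 (heq.refl _)
    have s4 : r [Sum.inr c, Sum.inl d, Sum.inr b, Sum.inr d, Sum.inl c, Sum.inl b]
        [Sum.inr c, Sum.inr b, Sum.inl d, Sum.inr d, Sum.inl c, Sum.inl b] := by
      simpa using ctx [Sum.inr c] [Sum.inr d, Sum.inl c, Sum.inl b]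
        [Sum.inl d, Sum.inr b] [Sum.inr b, Sum.inl d] hdb
    have s5 : r [Sum.inr c, Sum.inr b, Sum.inl d, Sum.inr d, Sum.inl c, Sum.inl b]
        [Sum.inr c, Sum.inr b, Sum.inl c, Sum.inl b] := by
      simpa using ctx [Sum.inr c, Sum.inr b] [Sum.inl c, Sum.inl b]
        [Sum.inl d, Sum.inr d] [] (hC d).1
    have s6 : r [Sum.inr c, Sum.inr b, Sum.inl c, Sum.inl b]
        [Sum.inr c, Sum.inl c, Sum.inr b, Sum.inl b] := by
      simpa using ctx [Sum.inr c] [Sum.inl b]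
        [Sum.inr b, Sum.inl c] [Sum.inl c, Sum.inr b] hbc
    have s7 : r [Sum.inr c, Sum.inl c, Sum.inr b, Sum.inl b] [] := by
      simpa using hcong [Sum.inr c, Sum.inl c] [] [Sum.inr b, Sum.inl b] []
        (hC c).2 (hC b).2
    exact heq.trans (heq.trans (heq.trans (heq.trans (heq.trans (heq.trans s1 s2) s3) s4)
      s5) s6) s7
  · rintro y ⟨u, u', s, t, v, v', h1, -, h3⟩
    rcases u with _|⟨x1,_|⟨x2,_|⟨x3,_|⟨x4,_|⟨x5,_|⟨x6,_|⟨x7,_|⟨x8,u⟩⟩⟩⟩⟩⟩⟩⟩ <;>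
      simp at h1
    · obtain ⟨-, rfl, rfl, -⟩ := h1
      simp [R17] at h3
    · obtain ⟨-, -, -, -, -, rfl, rfl, -⟩ := h1
      simp [R17] at h3
  · rintro y ⟨u, u', s, t, v, v', h1, -, h3⟩
    rcases u with _|⟨x1,_|⟨x2,_|⟨x3,_|⟨x4,_|⟨x5,_|⟨x6,_|⟨x7,_|⟨x8,u⟩⟩⟩⟩⟩⟩⟩⟩ <;>
      simp at h1
    obtain ⟨-, -, -, rfl, rfl, -⟩ := h1
    rcases v with _|⟨v1,_|⟨v2,v⟩⟩ <;> rcases v' with _|⟨w1,_|⟨w2,v'⟩⟩ <;>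
      simp [R17] at h3
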